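/- Let 1 ≤ k ≤ ℓ, let s = ⌊ℓ/k⌋, and let f = θ_{m,0} + θ_{m,k}. Then the map g = θ_{m,0} + θ_{m,k} + θ_{m,2k} + ⋯ + θ_{m,sk} is the compositional inverse of f, i.e., f ∘ g = g ∘ f = id on F_2^n. -/

import Mathlib

/-!
The heart of the argument is the identity `θ_a (x + θ_k x) = θ_a x + θ_{a+k} x` for `k ≥ 1`.
Expanding the product defining `θ_a (x + θ_k x)`, every term involving `θ_k` contains a factor
`z (z + 1) = 0`: either the leading variable `x_{j+mk}` of the window of `θ_k` at `j` meets the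
factor `x_{j+mk} + 1` further along the window of `θ_a`, or this window overlaps the one of `θ_k`
at `ma`. Hence `g ∘ f = θ_0 + θ_{(s+1)k}` telescopes, and `θ_K = 0` as soon as `mK > n`, because
then `m ∤ n` puts both `x_{i+mK} = x_{i+mK-n}` and `x_{i+mK-n} + 1` into `θ_K(x)_i`. Finally `f`
has a left inverse on the finite set `F_2^n`, so it is bijective and `g` is also a right inverse.
-/

/-- Index `i + j` computed modulo `n`, for `i : Fin n` and `j : ℕ`. -/
def idx {n : ℕ} (i : Fin n) (j : ℕ) : Fin n :=
  ⟨(i.val + j) % n, Nat.mod_lt _ i.pos⟩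

/-- The map `θ_{m,k} : F_2^n → F_2^n`; `θ_{m,0}` is the identity map, and for `k ≥ 1`,
`(θ_{m,k}(x))_i = x_{i+mk} · ∏_{1 ≤ j ≤ mk−1, m ∤ j} (x_{i+j} + 1)` (indices mod `n`). -/
def theta (n m k : ℕ) : (Fin n → ZMod 2) → Fin n → ZMod 2 :=
  if k = 0 then id
  else fun x i =>
    x (idx i (m * k)) *
      ∏ j ∈ (Finset.Ico 1 (m * k)).filter (fun j => ¬ m ∣ j), (x (idx i j) + 1)

open Finset Function

theorem mul_prod_add_eq_mul_prod {ι R : Type*} [LinearOrder ι] [CommSemiring R]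
    (c : R) (A B : ι → R) (s : Finset ι)
    (h : ∀ j ∈ s, c * B j * ∏ u ∈ s with j < u, A u = 0) :
    c * ∏ j ∈ s, (A j + B j) = c * ∏ j ∈ s, A j := by
  rw [prod_add_ordered, mul_add, mul_sum, sum_eq_zero, add_zero]
  intro j hj
  calc c * (B j * (∏ u ∈ s with u < j, (A u + B u)) * ∏ u ∈ s with j < u, A u)
      = c * B j * (∏ u ∈ s with j < u, A u) * ∏ u ∈ s with u < j, (A u + B u) := by ring
    _ = 0 := by rw [h j hj, zero_mul]

theorem mul_add_one_eq_zero (z : ZMod 2) : z * (z + 1) = 0 := by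
  revert z; decide

theorem mul_eq_zero_of_dvd_of_add_one_dvd {z p q : ZMod 2} (hp : z ∣ p) (hq : z + 1 ∣ q) :
    p * q = 0 :=
  zero_dvd_iff.mp (mul_add_one_eq_zero z ▸ mul_dvd_mul hp hq)

section offsets

def offsets (m k : ℕ) : Finset ℕ := (Ico 1 (m * k)).filter (fun j => ¬ m ∣ j)

theorem mem_offsets {m k u : ℕ} : u ∈ offsets m k ↔ (1 ≤ u ∧ u < m * k) ∧ ¬ m ∣ u := by
  simp [offsets]

theorem offsets_add (m a k : ℕ) :
    offsets m (a + k) = offsets m a ∪ (offsets m k).map (addLeftEmbedding (m * a)) := by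
  ext v
  have hdvd : ∀ w, m ∣ m * a + w ↔ m ∣ w := fun w => Nat.dvd_add_right (dvd_mul_right m a)
  simp only [mem_union, mem_map, mem_offsets, addLeftEmbedding_apply, mul_add]
  constructor
  · rintro ⟨⟨h1, h2⟩, h3⟩
    rcases lt_or_ge v (m * a) with hv | hv
    · exact Or.inl ⟨⟨h1, hv⟩, h3⟩
    · obtain ⟨w, rfl⟩ := Nat.exists_eq_add_of_le hv
      have hw : w ≠ 0 := by rintro rfl; simp at h3
      exact Or.inr ⟨w, ⟨⟨by omega, by omega⟩, (hdvd w).not.mp h3⟩, rfl⟩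
  · rintro (⟨⟨h1, h2⟩, h3⟩ | ⟨w, ⟨⟨h1, h2⟩, h3⟩, rfl⟩)
    · exact ⟨⟨h1, by omega⟩, h3⟩
    · exact ⟨⟨by omega, by omega⟩, (hdvd w).not.mpr h3⟩

theorem prod_offsets_add {M : Type*} [CommMonoid M] (f : ℕ → M) (m a k : ℕ) :
    ∏ u ∈ offsets m (a + k), f u =
      (∏ u ∈ offsets m a, f u) * ∏ u ∈ offsets m k, f (m * a + u) := by
  have hdisj : Disjoint (offsets m a) ((offsets m k).map (addLeftEmbedding (m * a))) := by
    simp only [disjoint_left, mem_map, mem_offsets, addLeftEmbedding_apply]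
    rintro _ ⟨⟨_, h⟩, _⟩ ⟨w, ⟨⟨hw, _⟩, _⟩, rfl⟩
    omega
  rw [offsets_add, prod_union hdisj, prod_map]
  rfl

end offsets

section thetaSeq

/-- `θ_{m,k}` on a sequence: `thetaSeq m k X j = (θ_{m,k} x)_{i+j}` when `X t = x_{i+t}`. -/
def thetaSeq (m k : ℕ) (X : ℕ → ZMod 2) (j : ℕ) : ZMod 2 :=
  X (j + m * k) * ∏ u ∈ offsets m k, (X (j + u) + 1)

variable {m k : ℕ} (X : ℕ → ZMod 2)

theorem dvd_thetaSeq (j : ℕ) : X (j + m * k) ∣ thetaSeq m k X j :=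
  dvd_mul_right _ _

theorem add_one_dvd_thetaSeq {u : ℕ} (hu : u ∈ offsets m k) (j : ℕ) :
    X (j + u) + 1 ∣ thetaSeq m k X j :=
  (dvd_prod_of_mem _ hu).mul_left _

theorem thetaSeq_eq_zero_of_periodic {n : ℕ} (hX : ∀ t, X (t + n) = X t) (hmn : ¬ m ∣ n)
    (hn : n < m * k) (j : ℕ) : thetaSeq m k X j = 0 := by
  have hn0 : n ≠ 0 := by rintro rfl; exact hmn (dvd_zero m)
  have hmem : m * k - n ∈ offsets m k := by
    refine mem_offsets.mpr ⟨⟨by omega, by omega⟩, fun h => hmn ?_⟩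
    simpa [Nat.sub_sub_self hn.le] using Nat.dvd_sub (dvd_mul_right m k) h
  have hX' : X (j + m * k) = X (j + (m * k - n)) := by
    rw [← hX (j + (m * k - n)), Nat.add_assoc, Nat.sub_add_cancel hn.le]
  exact mul_self_eq_zero.mp <|
    mul_eq_zero_of_dvd_of_add_one_dvd (hX' ▸ dvd_thetaSeq X j) (add_one_dvd_thetaSeq X hmem j)

/-- If `j + mk < ma`, the leading variable of `θ_k` at `j` meets its complement in the window of
`θ_a`; if `j + mk > ma`, the windows of `θ_k` at `j` and at `ma` overlap. -/
theorem thetaSeq_mul_thetaSeq_mul_prod_eq_zero (hk : k ≠ 0) {a j : ℕ} (hj : j ∈ offsets m a) :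
    (X (m * a) + thetaSeq m k X (m * a)) * thetaSeq m k X j *
      ∏ u ∈ offsets m a with j < u, (X u + 1) = 0 := by
  obtain ⟨⟨hj1, hja⟩, hjm⟩ := mem_offsets.mp hj
  have hm : m ≠ 0 := by rintro rfl; simp at hja
  have hmk : 0 < m * k := by positivity
  rcases lt_trichotomy (j + m * k) (m * a) with hlt | heq | hgt
  · have hmem : j + m * k ∈ offsets m a :=
      mem_offsets.mpr ⟨⟨by omega, hlt⟩, (Nat.dvd_add_left (dvd_mul_right m k)).not.mpr hjm⟩
    have hBj : thetaSeq m k X j * ∏ u ∈ offsets m a with j < u, (X u + 1) = 0 :=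
      mul_eq_zero_of_dvd_of_add_one_dvd (dvd_thetaSeq X j)
        (dvd_prod_of_mem _ (mem_filter.mpr ⟨hmem, by omega⟩))
    rw [mul_assoc, hBj, mul_zero]
  · exact absurd ((Nat.dvd_add_left (dvd_mul_right m k)).mp (heq ▸ dvd_mul_right m a)) hjm
  · have hu₁ : m * a - j ∈ offsets m k := by
      refine mem_offsets.mpr ⟨⟨by omega, by omega⟩, fun h => hjm ?_⟩
      simpa [Nat.sub_sub_self hja.le] using Nat.dvd_sub (dvd_mul_right m a) h
    have hu₂ : j + m * k - m * a ∈ offsets m k := by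
      refine mem_offsets.mpr ⟨⟨by omega, by omega⟩, fun h => hjm ?_⟩
      have := (Nat.dvd_add_right (dvd_mul_right m a)).mpr h
      rw [Nat.add_sub_cancel' hgt.le] at this
      exact (Nat.dvd_add_left (dvd_mul_right m k)).mp this
    have hXB : X (m * a) * thetaSeq m k X j = 0 := by
      refine mul_eq_zero_of_dvd_of_add_one_dvd dvd_rfl ?_
      simpa [Nat.add_sub_cancel' hja.le] using add_one_dvd_thetaSeq X hu₁ j
    have hBB : thetaSeq m k X j * thetaSeq m k X (m * a) = 0 := by
      refine mul_eq_zero_of_dvd_of_add_one_dvd (dvd_thetaSeq X j) ?_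
      simpa [Nat.add_sub_cancel' hgt.le] using add_one_dvd_thetaSeq X hu₂ (m * a)
    linear_combination (∏ u ∈ offsets m a with j < u, (X u + 1)) * (hXB + hBB)

theorem thetaSeq_add_thetaSeq (hk : k ≠ 0) (a : ℕ) :
    thetaSeq m a (X + thetaSeq m k X) 0 = thetaSeq m a X 0 + thetaSeq m (a + k) X 0 := by
  set B := thetaSeq m k X
  calc thetaSeq m a (X + B) 0
      = (X (m * a) + B (m * a)) * ∏ u ∈ offsets m a, ((X u + 1) + B u) := by
        simp only [thetaSeq, zero_add, Pi.add_apply, add_right_comm]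
    _ = (X (m * a) + B (m * a)) * ∏ u ∈ offsets m a, (X u + 1) :=
        mul_prod_add_eq_mul_prod _ _ _ _ fun _ hj => thetaSeq_mul_thetaSeq_mul_prod_eq_zero X hk hj
    _ = thetaSeq m a X 0 + thetaSeq m (a + k) X 0 := by
        simp only [thetaSeq, B, zero_add, prod_offsets_add _ m a k, mul_add]
        ring

end thetaSeq

section theta

variable {n m k : ℕ}

theorem idx_zero (i : Fin n) : idx i 0 = i :=
  Fin.ext (by simp [idx, Nat.mod_eq_of_lt i.isLt])

theorem idx_idx (i : Fin n) (s t : ℕ) : idx (idx i s) t = idx i (s + t) :=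
  Fin.ext (by simp only [idx, Nat.mod_add_mod, Nat.add_assoc])

theorem idx_add_self (i : Fin n) (t : ℕ) : idx i (t + n) = idx i t :=
  Fin.ext (by simp only [idx, ← Nat.add_assoc, Nat.add_mod_right])

def seqFrom (x : Fin n → ZMod 2) (i : Fin n) (t : ℕ) : ZMod 2 := x (idx i t)

theorem theta_zero : theta n m 0 = id := if_pos rfl

theorem theta_idx (hk : k ≠ 0) (x : Fin n → ZMod 2) (i : Fin n) (t : ℕ) :
    theta n m k x (idx i t) = thetaSeq m k (seqFrom x i) t := by
  simp only [theta, if_neg hk, thetaSeq, offsets, seqFrom, idx_idx]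

theorem theta_apply (hk : k ≠ 0) (x : Fin n → ZMod 2) (i : Fin n) :
    theta n m k x i = thetaSeq m k (seqFrom x i) 0 := by
  rw [← theta_idx hk, idx_zero]

theorem theta_eq_zero (hmn : ¬ m ∣ n) (hn : n < m * k) : theta n m k = 0 := by
  have hk : k ≠ 0 := by rintro rfl; simp at hn
  funext x i
  rw [theta_apply hk]
  exact thetaSeq_eq_zero_of_periodic _ (fun t => congrArg x (idx_add_self i t)) hmn hn 0

theorem theta_add_theta (hk : k ≠ 0) (a : ℕ) (x : Fin n → ZMod 2) :
    theta n m a (x + theta n m k x) = theta n m a x + theta n m (a + k) x := by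
  rcases eq_or_ne a 0 with rfl | ha
  · simp [theta_zero]
  funext i
  have hseq : seqFrom (x + theta n m k x) i = seqFrom x i + thetaSeq m k (seqFrom x i) := by
    funext t
    exact congrArg (x (idx i t) + ·) (theta_idx hk x i t)
  rw [Pi.add_apply, theta_apply ha, theta_apply ha, theta_apply (by omega), hseq,
    thetaSeq_add_thetaSeq _ hk]

theorem theta_partialInverse_comp (hk : k ≠ 0) (s : ℕ) :
    (theta n m 0 + ∑ t ∈ Icc 1 s, theta n m (t * k)) ∘ (theta n m 0 + theta n m k) =
      theta n m 0 + theta n m ((s + 1) * k) := by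
  induction s with
  | zero => simp [theta_zero]
  | succ s ih =>
    have hstep : theta n m ((s + 1) * k) ∘ (theta n m 0 + theta n m k) =
        theta n m ((s + 1) * k) + theta n m ((s + 1 + 1) * k) := by
      funext x
      simp only [comp_apply, Pi.add_apply, theta_zero, id_eq, theta_add_theta hk, add_mul, one_mul]
    rw [sum_Icc_succ_top (by omega), ← add_assoc, Pi.add_comp, ih, hstep,
      ZModModule.add_add_add_cancel]

end theta

theorem stmt13_general (n m k : ℕ) (hm : 2 ≤ m) (hmn : ¬ m ∣ n)
    (hk1 : 1 ≤ k) :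
    ((theta n m 0 + theta n m k) ∘
        (theta n m 0 + ∑ t ∈ Finset.Icc 1 (n / m / k), theta n m (t * k)) = id) ∧
    ((theta n m 0 + ∑ t ∈ Finset.Icc 1 (n / m / k), theta n m (t * k)) ∘
        (theta n m 0 + theta n m k) = id) := by
  have hlong : n < m * ((n / m / k + 1) * k) :=
    calc n < m * (n / m + 1) := Nat.lt_mul_div_succ n (by omega)
      _ ≤ m * ((n / m / k + 1) * k) := by
        gcongr
        rw [mul_comm]
        exact Nat.lt_mul_div_succ _ (by omega)
  have hleft : (theta n m 0 + ∑ t ∈ Icc 1 (n / m / k), theta n m (t * k)) ∘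
      (theta n m 0 + theta n m k) = id := by
    rw [theta_partialInverse_comp (by omega), theta_eq_zero hmn hlong, add_zero, theta_zero]
  have hsurj : Surjective (theta n m 0 + theta n m k) :=
    Finite.injective_iff_surjective.mp (leftInverse_iff_comp.mpr hleft).injective
  exact ⟨((leftInverse_iff_comp.mpr hleft).rightInverse_of_surjective hsurj).comp_eq_id, hleft⟩

theorem stmt13 (n m k : ℕ) (hn : 1 ≤ n) (hm : 2 ≤ m) (hmn : ¬ m ∣ n)
    (hk1 : 1 ≤ k) (hk2 : k ≤ n / m) :
    ((theta n m 0 + theta n m k) ∘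
        (theta n m 0 + ∑ t ∈ Finset.Icc 1 (n / m / k), theta n m (t * k)) = id) ∧
    ((theta n m 0 + ∑ t ∈ Finset.Icc 1 (n / m / k), theta n m (t * k)) ∘
        (theta n m 0 + theta n m k) = id) :=
  stmt13_general n m k hm hmn hk1
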